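/- Theorem: For DMU k in the relational two-stage network DEA model, if a feasible solution (u, v, w) attains overall efficiency E_k = 1 (i.e., Σ_i x_{ik} u_i = 1, Σ_r y_{rk} v_r = 1, and the constraints Σ_r y_{rj} v_r ≤ Σ_i x_{ij} u_i, Σ_d z_{dj} w_d ≤ Σ_i x_{ij} u_i, Σ_r y_{rj} v_r ≤ Σ_d z_{dj} w_d hold for all j), then the same weights yield stage efficiencies E_k^1 = Σ_d z_{dk} w_d = 1 and E_k^2 = Σ_r y_{rk} v_r / Σ_d z_{dk} w_d = 1. -/
import Mathlib

/-- In the relational two-stage network DEA model, if a feasible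
solution attains overall efficiency 1 for DMU k, then the same weights give
first-stage efficiency Σ_d z_{dk} w_d = 1 and second-stage efficiency
(Σ_r y_{rk} v_r) / (Σ_d z_{dk} w_d) = 1. -/
theorem overall_efficient_implies_stage_efficient
    (n m p s : ℕ) (x : Fin m → Fin n → ℝ) (z : Fin p → Fin n → ℝ) (y : Fin s → Fin n → ℝ)
    (hx : ∀ i j, 0 < x i j) (hz : ∀ d j, 0 < z d j) (hy : ∀ r j, 0 < y r j)
    (k : Fin n) (u : Fin m → ℝ) (v : Fin s → ℝ) (w : Fin p → ℝ)
    (hu : ∀ i, 0 < u i) (hv : ∀ r, 0 < v r) (hw : ∀ d, 0 < w d)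
    (hnorm : ∑ i, x i k * u i = 1)
    (hobj : ∑ r, y r k * v r = 1)
    (hc1 : ∀ j, ∑ r, y r j * v r ≤ ∑ i, x i j * u i)
    (hc2 : ∀ j, ∑ d, z d j * w d ≤ ∑ i, x i j * u i)
    (hc3 : ∀ j, ∑ r, y r j * v r ≤ ∑ d, z d j * w d) :
    (∑ d, z d k * w d = 1) ∧ (∑ r, y r k * v r) / (∑ d, z d k * w d) = 1 := by
  have h1 : ∑ d, z d k * w d = 1 :=
    le_antisymm (hnorm ▸ hc2 k) (hobj ▸ hc3 k)
  exact ⟨h1, by rw [h1, hobj, div_one]⟩
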